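/- arXiv:1510.06448 — 6 statements merged into one kernel-verified Lean document; each statement's English description precedes it below -/
import Mathlib

section
/- If π is a partition of {1,…,k} with fewer than k/2 blocks, then #S_n(π)/n^{k/2+1} → 0 as n → ∞, where S_n(π) is the set of (p_1,…,p_k) ∈ {1,…,n}^k with p_i + p_{i+1} = p_j + p_{j+1} iff i ∼_π j (cyclically). -/
open Finset Filter Real

/-- `i ∼_π j`: `i` and `j` lie in the same block of the partition `π`. -/
def sameBlock {k : ℕ} (P : Finpartition (Finset.univ : Finset (Fin k))) (i j : Fin k) : Prop :=
  ∃ b ∈ P.parts, i ∈ b ∧ j ∈ b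

/-- `S_n(π)`: tuples `(p 1, …, p k) ∈ {1,…,n}^k` with
`p i + p (i+1) = p j + p (j+1) ↔ i ∼_π j` (indices cyclic). -/
def consistentSet (k n : ℕ) [NeZero k] (P : Finpartition (Finset.univ : Finset (Fin k))) :
    Set (Fin k → ℕ) :=
  {p | (∀ i, 1 ≤ p i ∧ p i ≤ n) ∧
    ∀ i j : Fin k, p i + p (i + 1) = p j + p (j + 1) ↔ sameBlock P i j}

lemma consistentSet_card_le (k n : ℕ) [NeZero k]
    (P : Finpartition (Finset.univ : Finset (Fin k))) :
    (consistentSet k n P).ncard ≤ n * (2 * n) ^ P.parts.card := by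
  classical
  set S := consistentSet k n P with hS
  let rep : {b // b ∈ P.parts} → Fin k := fun b => (P.nonempty_of_mem_parts b.2).choose
  have hrep : ∀ b : {b // b ∈ P.parts}, rep b ∈ b.1 := fun b =>
    (P.nonempty_of_mem_parts b.2).choose_spec
  let f : (Fin k → ℕ) → ℕ × ({b // b ∈ P.parts} → ℕ) :=
    fun p => (p 0, fun b => p (rep b) + p (rep b + 1))
  have hinj : Set.InjOn f S := by
    intro p hp q hq hfq
    have key : ∀ i : Fin k, p i + p (i + 1) = q i + q (i + 1) := by
      intro i
      obtain ⟨b, hb, hib⟩ := P.exists_mem (Finset.mem_univ i)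
      have hsb : sameBlock P i (rep ⟨b, hb⟩) := ⟨b, hb, hib, hrep ⟨b, hb⟩⟩
      have h1 : p i + p (i + 1) = p (rep ⟨b, hb⟩) + p (rep ⟨b, hb⟩ + 1) :=
        (hp.2 i _).mpr hsb
      have h2 : q i + q (i + 1) = q (rep ⟨b, hb⟩) + q (rep ⟨b, hb⟩ + 1) :=
        (hq.2 i _).mpr hsb
      have h3 := congrFun (congrArg Prod.snd hfq) ⟨b, hb⟩
      simp only [f] at h3
      omega
    have h0 : p 0 = q 0 := congrArg Prod.fst hfq
    have hall : ∀ j : ℕ, ∀ h : j < k, p ⟨j, h⟩ = q ⟨j, h⟩ := by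
      intro j
      induction j with
      | zero =>
        intro h
        have : (⟨0, h⟩ : Fin k) = 0 := by ext; simp
        rw [this]; exact h0
      | succ j ih =>
        intro h
        have hj : j < k := Nat.lt_of_succ_lt h
        have hone : (1 : Fin k).val = 1 % k := rfl
        have hstep : (⟨j, hj⟩ : Fin k) + 1 = ⟨j + 1, h⟩ := by
          ext
          simp only [Fin.add_def, hone]
          have hk2 : 1 < k := by omega
          rw [Nat.mod_eq_of_lt hk2, Nat.mod_eq_of_lt h]
        have hkey := key ⟨j, hj⟩
        rw [hstep] at hkey
        have hih := ih hj
        omega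
    funext i
    have := hall i.val i.isLt
    simpa using this
  set T : Finset (ℕ × ({b // b ∈ P.parts} → ℕ)) :=
    (Finset.Icc 1 n) ×ˢ (Fintype.piFinset fun _ => Finset.Icc 1 (2 * n)) with hT
  have hsub : f '' S ⊆ ↑T := by
    rintro _ ⟨p, hp, rfl⟩
    simp only [hT, f, Finset.coe_product, Set.mem_prod, Finset.mem_coe, Finset.mem_Icc,
      Fintype.mem_piFinset]
    refine ⟨⟨(hp.1 0).1, (hp.1 0).2⟩, fun b => ?_⟩
    have h1 := hp.1 (rep b)
    have h2 := hp.1 (rep b + 1)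
    omega
  have hcard : T.card = n * (2 * n) ^ P.parts.card := by
    simp [hT, Fintype.card_coe, Nat.card_Icc, mul_comm]
  calc S.ncard = (f '' S).ncard := (Set.ncard_image_of_injOn hinj).symm
    _ ≤ (↑T : Set _).ncard := Set.ncard_le_ncard hsub T.finite_toSet
    _ = T.card := Set.ncard_coe_finset T
    _ = n * (2 * n) ^ P.parts.card := hcard

/-- If `π` has fewer than `k/2` blocks, then `#S_n(π) / n^(k/2 + 1) → 0` as `n → ∞`. -/
theorem stmt4 (k : ℕ) [NeZero k] (P : Finpartition (Finset.univ : Finset (Fin k)))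
    (hP : 2 * P.parts.card < k) :
    Tendsto (fun n : ℕ => ((consistentSet k n P).ncard : ℝ) / (n : ℝ) ^ ((k : ℝ) / 2 + 1))
      atTop (nhds 0) := by
  set m := P.parts.card with hm
  have hmk : (m : ℝ) + 1 < (k : ℝ) / 2 + 1 := by
    have : (2 * m : ℝ) < k := by exact_mod_cast hP
    linarith
  set e : ℝ := (m : ℝ) + 1 - ((k : ℝ) / 2 + 1) with he
  have hepos : 0 < -e := by simp only [he]; linarith
  have hg : Tendsto (fun n : ℕ => (2 : ℝ) ^ m * (n : ℝ) ^ e) atTop (nhds 0) := by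
    have h1 := (tendsto_rpow_neg_atTop hepos).comp tendsto_natCast_atTop_atTop
    have h2 := h1.const_mul ((2 : ℝ) ^ m)
    simpa using h2
  apply squeeze_zero' (g := fun n : ℕ => (2 : ℝ) ^ m * (n : ℝ) ^ e)
  · filter_upwards with n
    positivity
  · filter_upwards [eventually_ge_atTop 1] with n hn
    have hn0 : (0 : ℝ) < n := by exact_mod_cast hn
    have hb := consistentSet_card_le k n P
    have hb' : ((consistentSet k n P).ncard : ℝ) ≤ (2 : ℝ) ^ m * (n : ℝ) ^ ((m : ℝ) + 1) := by
      calc ((consistentSet k n P).ncard : ℝ) ≤ ((n * (2 * n) ^ m : ℕ) : ℝ) := by exact_mod_cast hb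
        _ = (2 : ℝ) ^ m * (n : ℝ) ^ (m + 1 : ℕ) := by push_cast; ring
        _ = (2 : ℝ) ^ m * (n : ℝ) ^ ((m : ℝ) + 1) := by
            rw [← Real.rpow_natCast (n : ℝ) (m + 1)]; push_cast; ring_nf
    have hdiv : (2 : ℝ) ^ m * (n : ℝ) ^ ((m : ℝ) + 1) / (n : ℝ) ^ ((k : ℝ) / 2 + 1)
        = (2 : ℝ) ^ m * (n : ℝ) ^ e := by
      rw [he, Real.rpow_sub hn0]
      ring
    calc ((consistentSet k n P).ncard : ℝ) / (n : ℝ) ^ ((k : ℝ) / 2 + 1)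
        ≤ (2 : ℝ) ^ m * (n : ℝ) ^ ((m : ℝ) + 1) / (n : ℝ) ^ ((k : ℝ) / 2 + 1) := by
          gcongr
      _ = (2 : ℝ) ^ m * (n : ℝ) ^ e := hdiv
  · exact hg
end

section
/- For a non-crossing pair partition π of {1,…,k} (k even), lim_{n→∞} #S_n(π)/n^{k/2+1} = 1, where S_n(π) = {(p_1,…,p_k) ∈ {1,…,n}^k : p_i + p_{i+1} = p_j + p_{j+1} ⟺ i ∼_π j} (indices cyclic). -/
open Finset Filter

/-- `π` is a pair partition: every block has exactly two elements. -/
def isPairPartition {k : ℕ} (P : Finpartition (Finset.univ : Finset (Fin k))) : Prop :=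
  ∀ b ∈ P.parts, b.card = 2

/-- `π` is crossing: there are `i < j < l < m` with `i ∼ l` and `j ∼ m`. -/
def isCrossing {k : ℕ} (P : Finpartition (Finset.univ : Finset (Fin k))) : Prop :=
  ∃ i j l m : Fin k, i < j ∧ j < l ∧ l < m ∧ sameBlock P i l ∧ sameBlock P j m

/-!
A non-crossing pair partition `σ` of the `2m` cyclic positions is the contour of a plane tree with
`m` edges: position `i` sits at a vertex `e i`, step `i` crosses the edge `{e i, e (i + 1)}`, and
the two crossings of each edge are the two steps paired by `σ`. The walk is built by induction,
removing two adjacent partners `a, a + 1` (a detour to a leaf). The equations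
`p i + p (i + 1) = p (σ i) + p (σ i + 1)` force `p` to be constant on the fibres of `e`, so `S_n(π)`
is in bijection with the labellings `x` of the `m + 1` vertices by `[1, n]` whose edge sums
`x u + x v` differ on different edges. Every one of the `n ^ (m + 1)` labellings qualifies except
those satisfying one of at most `(2m)²` nontrivial relations `x a + x b = x c + x d`, each of which
determines one coordinate from the others and so has at most `n ^ m` solutions.
-/
lemma exists_involution_of_isPairPartition {k : ℕ} {P : Finpartition (univ : Finset (Fin k))}
    (hP : isPairPartition P) :
    ∃ σ : Fin k → Fin k, Function.Involutive σ ∧ (∀ i, σ i ≠ i) ∧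
      ∀ i j, sameBlock P i j ↔ j = i ∨ j = σ i := by
  have hpart : ∀ i, ∃ j ≠ i, P.part i = {i, j} := by
    intro i
    have hi : i ∈ P.part i := P.mem_part (mem_univ i)
    have hcard : #((P.part i).erase i) = 1 := by
      rw [card_erase_of_mem hi, hP _ (P.part_mem.mpr (mem_univ i))]
    obtain ⟨j, hj⟩ := card_eq_one.mp hcard
    have hji : j ∈ (P.part i).erase i := hj ▸ mem_singleton_self j
    exact ⟨j, ne_of_mem_erase hji, by rw [← insert_erase hi, hj]⟩
  choose σ hσne hσ using hpart
  have hsame : ∀ i j, sameBlock P i j ↔ j ∈ P.part i := fun i j => by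
    rw [P.mem_part_iff_exists, sameBlock]
    simp only [and_comm]
  have hσmem : ∀ i, σ i ∈ P.part i := fun i => by simp [hσ i]
  refine ⟨σ, fun i => ?_, hσne, fun i j => by rw [hsame, hσ i, mem_insert, mem_singleton]⟩
  have hpart_eq : P.part (σ i) = P.part i :=
    ((P.mem_part_iff_part_eq_part (mem_univ _) (mem_univ _)).mp (hσmem i))
  have h := hσmem (σ i)
  rw [hpart_eq, hσ i, mem_insert, mem_singleton] at h
  exact h.resolve_right (hσne (σ i))

def IsNoncrossing {k : ℕ} (σ : Fin k → Fin k) : Prop :=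
  ∀ a b c d, a < b → b < c → c < d → σ a = c → σ b ≠ d

lemma IsNoncrossing.exists_val_eq_succ {k : ℕ} [NeZero k] {σ : Fin k → Fin k}
    (hnc : IsNoncrossing σ) (hσ : Function.Involutive σ) (hfix : ∀ i, σ i ≠ i) :
    ∃ a, (σ a).val = a.val + 1 := by
  classical
  have hS : (univ.filter fun i => i < σ i).Nonempty :=
    ⟨0, mem_filter.mpr ⟨mem_univ _, lt_of_le_of_ne (Fin.zero_le _) (hfix 0).symm⟩⟩
  -- a pair of minimal length is adjacent, since it cannot nest or cross anything
  obtain ⟨i, hi, hmin⟩ := exists_min_image _ (fun i => (σ i).val - i.val) hS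
  simp only [mem_filter, mem_univ, true_and] at hi hmin
  by_contra! hne
  have hi' : i.val + 1 < (σ i).val := by
    have := hne i
    rw [Fin.lt_def] at hi
    omega
  obtain ⟨b, hb⟩ : ∃ b : Fin k, b.val = i.val + 1 := ⟨⟨i.val + 1, by omega⟩, rfl⟩
  have hbσ : b.val ≠ (σ b).val := fun h => hfix b (Fin.ext h).symm
  have hib : i < b := Fin.lt_def.mpr (by omega)
  have hbσi : b < σ i := Fin.lt_def.mpr (by omega)
  rcases lt_trichotomy (σ b) i with h | h | h
  · exact hnc (σ b) i b (σ i) h hib hbσi (hσ b) rfl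
  · exact hbσi.ne (by rw [← h, hσ])
  rcases lt_trichotomy (σ b) (σ i) with h' | h' | h'
  · have := hmin b (Fin.lt_def.mpr (by rw [Fin.lt_def] at h; omega))
    rw [Fin.lt_def] at h h'
    omega
  · exact hib.ne (hσ.injective h').symm
  · exact hnc i b (σ i) (σ b) hib hbσi h' rfl rfl

lemma IsNoncrossing.of_strictMono_comp {k l : ℕ} {σ : Fin l → Fin l} {σ' : Fin k → Fin k}
    {ι : Fin k → Fin l} (hnc : IsNoncrossing σ) (hι : StrictMono ι)
    (hσ' : ∀ t, ι (σ' t) = σ (ι t)) : IsNoncrossing σ' := by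
  intro a b c d hab hbc hcd hac hbd
  exact hnc (ι a) (ι b) (ι c) (ι d) (hι hab) (hι hbc) (hι hcd) (by rw [← hσ', hac])
    (by rw [← hσ', hbd])

lemma Fin.val_add_one_eq_or {n : ℕ} [NeZero n] (x : Fin n) :
    (x.val + 1 < n ∧ (x + 1).val = x.val + 1) ∨ (x.val + 1 = n ∧ (x + 1).val = 0) := by
  rcases Nat.lt_or_ge (x.val + 1) n with h | h
  · exact Or.inl ⟨h, Fin.val_add_one_of_lt' h⟩
  · have hx := x.isLt
    refine Or.inr ⟨by omega, ?_⟩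
    rw [Fin.val_add, Fin.val_one']
    rcases Nat.lt_or_ge 1 n with h1 | h1
    · rw [Nat.mod_eq_of_lt h1, show x.val + 1 = n by omega, Nat.mod_self]
    · obtain rfl : n = 1 := by omega
      exact Nat.mod_one _

/-- `e` lists the vertices met by a closed walk around a tree on `Fin r` that crosses every edge
twice: step `i` crosses the edge `{e i, e (i + 1)}`, which is crossed once more, at step `σ i`, and
by no other step. -/
structure IsTreeWalk {k r : ℕ} [NeZero k] (σ : Fin k → Fin k) (e : Fin k → Fin r) : Prop where
  surjective : Function.Surjective e
  edge_eq_iff : ∀ i j, s(e i, e (i + 1)) = s(e j, e (j + 1)) ↔ j = i ∨ j = σ i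
  eq_of_sum_eq : ∀ p : Fin k → ℕ, (∀ i, p i + p (i + 1) = p (σ i) + p (σ i + 1)) →
    ∀ i j, e i = e j → p i = p j

section InsertLeaf

variable {k r : ℕ} (a : Fin (k + 1))

def skipTwo (t : Fin k) : Fin (k + 2) :=
  if t.val < a.val then t.castAdd 2 else t.addNat 2

lemma val_skipTwo (t : Fin k) :
    (skipTwo a t).val = if t.val < a.val then t.val else t.val + 2 := by
  unfold skipTwo; split_ifs <;> rfl

lemma strictMono_skipTwo : StrictMono (skipTwo (k := k) a) := by
  intro s t h
  rw [Fin.lt_def, val_skipTwo, val_skipTwo]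
  rw [Fin.lt_def] at h
  split_ifs <;> omega

lemma mem_range_skipTwo {j : Fin (k + 2)} :
    j ∈ Set.range (skipTwo a) ↔ j ≠ a.castSucc ∧ j ≠ a.succ := by
  rw [Ne, Ne, Fin.ext_iff, Fin.ext_iff, Fin.val_castSucc, Fin.val_succ]
  constructor
  · rintro ⟨t, rfl⟩
    rw [val_skipTwo]
    split_ifs <;> omega
  · rintro ⟨h1, h2⟩
    have := j.isLt
    by_cases hja : j.val < a.val
    · exact ⟨⟨j.val, by omega⟩, Fin.ext (by rw [val_skipTwo]; simp [hja])⟩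
    · refine ⟨⟨j.val - 2, by omega⟩, Fin.ext ?_⟩
      rw [val_skipTwo, Fin.val_mk, if_neg (by omega)]
      omega

lemma exists_skipTwo_comp_eq {σ : Fin (k + 2) → Fin (k + 2)} (hσ : Function.Involutive σ)
    (ha : σ a.castSucc = a.succ) :
    ∃ σ' : Fin k → Fin k, ∀ t, skipTwo a (σ' t) = σ (skipTwo a t) := by
  have hrange : ∀ t, σ (skipTwo a t) ∈ Set.range (skipTwo a) := by
    intro t
    have ht := (mem_range_skipTwo a).mp ⟨t, rfl⟩
    rw [mem_range_skipTwo]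
    constructor
    · intro h
      exact ht.2 (by rw [← hσ (skipTwo a t), h, ha])
    · intro h
      exact ht.1 (by rw [← hσ (skipTwo a t), h, ← ha, hσ])
  choose σ' hσ' using hrange
  exact ⟨σ', hσ'⟩

variable [NeZero k]

lemma skipTwo_add_one (t : Fin k) :
    skipTwo a (t + 1) = skipTwo a t + 1 ∨
      (skipTwo a t + 1 = a.castSucc ∧ skipTwo a (t + 1) = a.succ + 1) := by
  have h1 := val_skipTwo a t
  have h2 := val_skipTwo a (t + 1)
  have := a.isLt
  have := Fin.val_succ a
  rw [Fin.ext_iff, Fin.ext_iff, Fin.ext_iff, Fin.val_castSucc]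
  rcases Fin.val_add_one_eq_or t with ⟨h3, h4⟩ | ⟨h3, h4⟩ <;>
  rcases Fin.val_add_one_eq_or (skipTwo a t) with ⟨h5, h6⟩ | ⟨h5, h6⟩ <;>
  rcases Fin.val_add_one_eq_or a.succ with ⟨h7, h8⟩ | ⟨h7, h8⟩ <;>
  rw [h6, h8] <;> rw [h4] at h2 <;> split_ifs at h1 h2 <;> omega

/-- The walk `e'` with a detour to a new leaf `Fin.last r` at position `a + 1`; position `a`
repeats the vertex of position `a + 2`. -/
noncomputable def insertLeaf (e' : Fin k → Fin r) (j : Fin (k + 2)) : Fin (r + 1) :=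
  if j = a.succ then Fin.last r
  else (e' (Function.invFun (skipTwo a) (if j = a.castSucc then a.succ + 1 else j))).castSucc

variable (e' : Fin k → Fin r)

lemma succ_add_one_mem_range_skipTwo : a.succ + 1 ∈ Set.range (skipTwo a) := by
  have := NeZero.ne k
  rw [mem_range_skipTwo, Ne, Ne, Fin.ext_iff, Fin.ext_iff, Fin.val_castSucc]
  rcases Fin.val_add_one_eq_or a.succ with ⟨h1, h2⟩ | ⟨h1, h2⟩ <;>
  simp only [h2, Fin.val_succ] at h1 ⊢ <;> omega

lemma insertLeaf_skipTwo (t : Fin k) : insertLeaf a e' (skipTwo a t) = (e' t).castSucc := by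
  obtain ⟨h1, h2⟩ := (mem_range_skipTwo a).mp ⟨t, rfl⟩
  rw [insertLeaf, if_neg h2, if_neg h1,
    Function.leftInverse_invFun (strictMono_skipTwo a).injective]

lemma insertLeaf_succ : insertLeaf a e' a.succ = Fin.last r := if_pos rfl

lemma insertLeaf_castSucc : insertLeaf a e' a.castSucc = insertLeaf a e' (a.succ + 1) := by
  obtain ⟨t, ht⟩ := succ_add_one_mem_range_skipTwo a
  rw [← ht, insertLeaf_skipTwo, insertLeaf, if_neg (Fin.castSucc_lt_succ (i := a)).ne, if_pos rfl,
    ← ht, Function.leftInverse_invFun (strictMono_skipTwo a).injective]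

lemma insertLeaf_eq_last_iff {j : Fin (k + 2)} : insertLeaf a e' j = Fin.last r ↔ j = a.succ := by
  unfold insertLeaf
  split_ifs with h <;> simp [h, (Fin.castSucc_lt_last _).ne]

lemma insertLeaf_skipTwo_add_one (t : Fin k) :
    insertLeaf a e' (skipTwo a t + 1) = (e' (t + 1)).castSucc := by
  rcases skipTwo_add_one a t with h | ⟨h1, h2⟩
  · rw [← h, insertLeaf_skipTwo]
  · rw [h1, insertLeaf_castSucc, ← h2, insertLeaf_skipTwo]

lemma edge_insertLeaf_skipTwo (t : Fin k) :
    s(insertLeaf a e' (skipTwo a t), insertLeaf a e' (skipTwo a t + 1)) =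
      s(e' t, e' (t + 1)).map Fin.castSucc := by
  rw [insertLeaf_skipTwo, insertLeaf_skipTwo_add_one, Sym2.map_mk]

lemma edge_insertLeaf_castSucc :
    s(insertLeaf a e' a.castSucc, insertLeaf a e' (a.castSucc + 1)) =
      s(insertLeaf a e' (a.succ + 1), Fin.last r) := by
  rw [insertLeaf_castSucc, Fin.coeSucc_eq_succ, insertLeaf_succ]

lemma edge_insertLeaf_succ :
    s(insertLeaf a e' a.succ, insertLeaf a e' (a.succ + 1)) =
      s(insertLeaf a e' (a.succ + 1), Fin.last r) := by
  rw [insertLeaf_succ, Sym2.eq_swap]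

variable {a e'} {σ : Fin (k + 2) → Fin (k + 2)} {σ' : Fin k → Fin k}

lemma IsTreeWalk.surjective_insertLeaf (he : IsTreeWalk σ' e') :
    Function.Surjective (insertLeaf a e') := by
  intro y
  induction y using Fin.lastCases with
  | last => exact ⟨a.succ, insertLeaf_succ a e'⟩
  | cast c =>
    obtain ⟨t, rfl⟩ := he.surjective c
    exact ⟨skipTwo a t, insertLeaf_skipTwo a e' t⟩

lemma IsTreeWalk.edge_insertLeaf_eq_iff (he : IsTreeWalk σ' e') (hσ : Function.Involutive σ)
    (ha : σ a.castSucc = a.succ) (hσ' : ∀ t, skipTwo a (σ' t) = σ (skipTwo a t))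
    (i j : Fin (k + 2)) :
    s(insertLeaf a e' i, insertLeaf a e' (i + 1)) = s(insertLeaf a e' j, insertLeaf a e' (j + 1)) ↔
      j = i ∨ j = σ i := by
  have hσs : σ a.succ = a.castSucc := by rw [← ha, hσ]
  have hcases : ∀ j, j = a.castSucc ∨ j = a.succ ∨ ∃ t, skipTwo a t = j := by
    intro j
    by_cases h1 : j = a.castSucc
    · exact Or.inl h1
    by_cases h2 : j = a.succ
    · exact Or.inr (Or.inl h2)
    exact Or.inr (Or.inr ((mem_range_skipTwo a).mpr ⟨h1, h2⟩))
  have hne : ∀ t, skipTwo a t ≠ a.castSucc ∧ skipTwo a t ≠ a.succ :=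
    fun t => (mem_range_skipTwo a).mp ⟨t, rfl⟩
  have hlast : ∀ t x, s(x, Fin.last r) ≠ s(e' t, e' (t + 1)).map Fin.castSucc := by
    intro t x h
    have := Sym2.mem_mk_right x (Fin.last r)
    rw [h, Sym2.mem_map] at this
    obtain ⟨y, -, hy⟩ := this
    exact (Fin.castSucc_lt_last y).ne hy
  rcases hcases i with rfl | rfl | ⟨t, rfl⟩ <;> rcases hcases j with rfl | rfl | ⟨u, rfl⟩ <;>
    simp only [edge_insertLeaf_castSucc, edge_insertLeaf_succ, edge_insertLeaf_skipTwo, ha, hσs,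
      ← hσ', (strictMono_skipTwo a).injective.eq_iff, (hne _).1, (hne _).2, Ne.symm (hne _).1,
      Ne.symm (hne _).2, hlast, Ne.symm (hlast _ _), (Fin.castSucc_lt_succ (i := a)).ne,
      (Fin.castSucc_lt_succ (i := a)).ne', (Sym2.map.injective (Fin.castSucc_injective r)).eq_iff,
      he.edge_eq_iff, or_true, or_false]

lemma IsTreeWalk.eq_of_sum_eq_insertLeaf (he : IsTreeWalk σ' e')
    (ha : σ a.castSucc = a.succ) (hσ' : ∀ t, skipTwo a (σ' t) = σ (skipTwo a t))
    (p : Fin (k + 2) → ℕ) (hp : ∀ i, p i + p (i + 1) = p (σ i) + p (σ i + 1))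
    (i j : Fin (k + 2)) (hij : insertLeaf a e' i = insertLeaf a e' j) : p i = p j := by
  have hpa : p a.castSucc = p (a.succ + 1) := by
    have := hp a.castSucc
    rw [ha, Fin.coeSucc_eq_succ] at this
    omega
  have hp_add_one : ∀ t, p (skipTwo a (t + 1)) = p (skipTwo a t + 1) := by
    intro t
    rcases skipTwo_add_one a t with h | ⟨h1, h2⟩
    · rw [h]
    · rw [h1, h2, hpa]
  -- deleting the leaf leaves a solution of the equations of `σ'`
  have hfac := he.eq_of_sum_eq (p ∘ skipTwo a) fun t => by
    simp only [Function.comp_apply]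
    rw [hp_add_one, hp_add_one, hσ']
    exact hp _
  have hlift : ∀ j ≠ a.succ, ∃ t, insertLeaf a e' j = (e' t).castSucc ∧ p j = p (skipTwo a t) := by
    intro j hj
    by_cases hja : j = a.castSucc
    · obtain ⟨t, ht⟩ := succ_add_one_mem_range_skipTwo a
      refine ⟨t, ?_, ?_⟩
      · rw [hja, insertLeaf_castSucc, ← ht, insertLeaf_skipTwo]
      · rw [hja, hpa, ht]
    · obtain ⟨t, rfl⟩ := (mem_range_skipTwo a).mpr ⟨hja, hj⟩
      exact ⟨t, insertLeaf_skipTwo a e' t, rfl⟩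
  by_cases hi : i = a.succ
  · rw [hi, insertLeaf_succ, eq_comm, insertLeaf_eq_last_iff] at hij
    rw [hi, hij]
  have hj : j ≠ a.succ := by
    rwa [Ne, ← insertLeaf_eq_last_iff a e', ← hij, insertLeaf_eq_last_iff]
  obtain ⟨t, hte, htp⟩ := hlift i hi
  obtain ⟨u, hue, hup⟩ := hlift j hj
  rw [hte, hue] at hij
  rw [htp, hup]
  exact hfac t u (Fin.castSucc_injective r hij)

lemma IsTreeWalk.insertLeaf (he : IsTreeWalk σ' e') (hσ : Function.Involutive σ)
    (ha : σ a.castSucc = a.succ) (hσ' : ∀ t, skipTwo a (σ' t) = σ (skipTwo a t)) :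
    IsTreeWalk σ (insertLeaf a e') where
  surjective := he.surjective_insertLeaf
  edge_eq_iff := he.edge_insertLeaf_eq_iff hσ ha hσ'
  eq_of_sum_eq := he.eq_of_sum_eq_insertLeaf ha hσ'

end InsertLeaf

lemma isTreeWalk_id_of_two {σ : Fin 2 → Fin 2} (hfix : ∀ i, σ i ≠ i) : IsTreeWalk σ id where
  surjective := Function.surjective_id
  edge_eq_iff := by
    obtain rfl : σ = fun i => i + 1 := funext fun i => by
      have := hfix i
      revert this
      generalize σ i = j
      revert i j
      decide
    decide
  eq_of_sum_eq _ _ _ _ h := congrArg _ h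

theorem exists_isTreeWalk :
    ∀ (m : ℕ) [NeZero (2 * m)] (σ : Fin (2 * m) → Fin (2 * m)), Function.Involutive σ →
      (∀ i, σ i ≠ i) → IsNoncrossing σ → ∃ e : Fin (2 * m) → Fin (m + 1), IsTreeWalk σ e := by
  intro m
  induction m with
  | zero => intro hm; exact absurd rfl hm.ne
  | succ m ih =>
    intro _ σ hσ hfix hnc
    rcases Nat.eq_zero_or_pos m with rfl | hm
    · exact ⟨id, isTreeWalk_id_of_two hfix⟩
    have : NeZero (2 * m) := ⟨by omega⟩
    obtain ⟨a, ha⟩ := hnc.exists_val_eq_succ hσ hfix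
    -- `a` and `a + 1` are paired: the walk steps out to a leaf and straight back
    let a' : Fin (2 * m + 1) := ⟨a.val, by have := (σ a).isLt; omega⟩
    have ha' : σ a'.castSucc = a'.succ := Fin.ext ha
    obtain ⟨σ', hσ'⟩ := exists_skipTwo_comp_eq a' hσ ha'
    have hinj := (strictMono_skipTwo a').injective
    obtain ⟨e', he'⟩ := ih σ'
      (fun t => hinj (by rw [hσ', hσ', hσ]))
      (fun t h => hfix _ (by rw [← hσ', h]))
      (hnc.of_strictMono_comp (strictMono_skipTwo a') hσ')
    exact ⟨insertLeaf a' e', he'.insertLeaf hσ ha' hσ'⟩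

lemma exists_indicator_sum_ne {V : Type*} [DecidableEq V] {a b c d : V}
    (h : s(a, b) ≠ s(c, d)) :
    ∃ t, ((if a = t then 1 else 0) + (if b = t then 1 else 0) : ℤ) ≠
      (if c = t then 1 else 0) + (if d = t then 1 else 0) := by
  rw [Ne, Sym2.eq_iff, not_or, not_and_or, not_and_or] at h
  by_cases hac : a = c
  · have hdb : d ≠ b := fun hdb => h.1.resolve_left (not_not.mpr hac) hdb.symm
    exact ⟨b, by simp [hac, hdb]⟩
  by_cases had : a = d
  · have hcb : c ≠ b := fun hcb => h.2.resolve_left (not_not.mpr had) hcb.symm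
    exact ⟨b, by simp [had, hcb]⟩
  exact ⟨a, by simp [Ne.symm hac, Ne.symm had]; split_ifs <;> norm_num⟩

open Fintype in
lemma card_filter_add_eq_add_le {V : Type*} [Fintype V] [DecidableEq V] {a b c d : V}
    (h : s(a, b) ≠ s(c, d)) (s : Finset ℕ) :
    #((piFinset fun _ : V => s).filter (fun x => x a + x b = x c + x d)) ≤
      #s ^ (card V - 1) := by
  obtain ⟨t, ht⟩ := exists_indicator_sum_ne h
  have hcard : #(piFinset fun _ : {v // v ≠ t} => s) = #s ^ (card V - 1) := by
    rw [card_piFinset, prod_const, card_univ, card_subtype_compl, card_subtype_eq]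
  rw [← hcard]
  refine card_le_card_of_injOn (fun x v => x v) (fun x hx => ?_) (fun x hx y hy hxy => ?_)
  · simp only [coe_filter, Set.mem_ofPred_eq, mem_piFinset] at hx
    simp [hx.1]
  · simp only [coe_filter, Set.mem_ofPred_eq] at hx hy
    have hoff : ∀ v, v ≠ t → x v = y v := fun v hv => congrFun hxy ⟨v, hv⟩
    have hdiff : ∀ v, (x v : ℤ) - y v = if v = t then (x t : ℤ) - y t else 0 := by
      intro v
      split_ifs with hv
      · rw [hv]
      · rw [hoff v hv, sub_self]
    have key : (((if a = t then 1 else 0) + (if b = t then 1 else 0) : ℤ) -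
        ((if c = t then 1 else 0) + (if d = t then 1 else 0))) * ((x t : ℤ) - y t) = 0 := by
      have hx2 : (x a : ℤ) + x b = x c + x d := by exact_mod_cast hx.2
      have hy2 : (y a : ℤ) + y b = y c + y d := by exact_mod_cast hy.2
      have := hdiff a; have := hdiff b; have := hdiff c; have := hdiff d
      split_ifs at * <;> linarith
    funext v
    by_cases hv : v = t
    · subst hv
      have := (mul_eq_zero.mp key).resolve_left (sub_ne_zero.mpr ht)
      omega
    · exact hoff v hv

lemma tendsto_div_pow_of_le {f : ℕ → ℕ} {r C : ℕ} (hle : ∀ n, f n ≤ n ^ (r + 1))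
    (hge : ∀ n, n ^ (r + 1) ≤ f n + C * n ^ r) :
    Tendsto (fun n => (f n : ℝ) / (n : ℝ) ^ (r + 1)) atTop (nhds 1) := by
  have hlow : Tendsto (fun n : ℕ => 1 - (C : ℝ) / n) atTop (nhds 1) := by
    simpa using tendsto_const_nhds.sub (tendsto_const_div_atTop_nhds_zero_nat (C : ℝ))
  refine tendsto_of_tendsto_of_tendsto_of_le_of_le' hlow tendsto_const_nhds ?_ ?_ <;>
    filter_upwards [eventually_gt_atTop 0] with n hn <;>
    have hn' : (0 : ℝ) < (n : ℝ) ^ (r + 1) := by positivity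
  · have h := (Nat.cast_le (α := ℝ)).mpr (hge n)
    push_cast at h
    have hn0 : (n : ℝ) ≠ 0 := by positivity
    have : (1 - (C : ℝ) / n) * (n : ℝ) ^ (r + 1) = (n : ℝ) ^ (r + 1) - C * (n : ℝ) ^ r := by
      field_simp
      ring
    rw [le_div_iff₀ hn', this]
    linarith
  · rw [div_le_one hn']
    exact_mod_cast hle n

section Counting

variable {k r : ℕ} [NeZero k] {P : Finpartition (univ : Finset (Fin k))} {σ : Fin k → Fin k}
  {e : Fin k → Fin r}

lemma IsTreeWalk.exists_comp_eq_of_mem_consistentSet (he : IsTreeWalk σ e)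
    (hP : ∀ i j, sameBlock P i j ↔ j = i ∨ j = σ i) {n : ℕ} {p : Fin k → ℕ}
    (hp : p ∈ consistentSet k n P) : ∃ x, x ∘ e = p := by
  obtain ⟨g, hg⟩ := he.surjective.hasRightInverse
  refine ⟨p ∘ g, funext fun i => he.eq_of_sum_eq p (fun i => ?_) _ _ (hg (e i))⟩
  exact (hp.2 i (σ i)).mpr ((hP i (σ i)).mpr (Or.inr rfl))

lemma IsTreeWalk.comp_mem_consistentSet_iff (he : IsTreeWalk σ e)
    (hP : ∀ i j, sameBlock P i j ↔ j = i ∨ j = σ i) {n : ℕ} {x : Fin r → ℕ} :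
    x ∘ e ∈ consistentSet k n P ↔ x ∈ Fintype.piFinset (fun _ => Icc 1 n) ∧
      ∀ i j, ¬ sameBlock P i j → x (e i) + x (e (i + 1)) ≠ x (e j) + x (e (j + 1)) := by
  simp only [consistentSet, Set.mem_ofPred_eq, Fintype.mem_piFinset, mem_Icc, Function.comp_apply]
  constructor
  · rintro ⟨hbox, hsum⟩
    refine ⟨fun v => ?_, fun i j hij h => hij ((hsum i j).mp h)⟩
    obtain ⟨i, rfl⟩ := he.surjective v
    exact hbox i
  · rintro ⟨hbox, hsum⟩
    refine ⟨fun i => hbox (e i), fun i j => ⟨fun h => not_not.mp (mt (hsum i j) (not_not.mpr h)),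
      fun h => ?_⟩⟩
    rcases Sym2.eq_iff.mp ((he.edge_eq_iff i j).mpr ((hP i j).mp h)) with ⟨h1, h2⟩ | ⟨h1, h2⟩
    · rw [h1, h2]
    · rw [h1, h2, add_comm]

lemma IsTreeWalk.ncard_consistentSet_eq (he : IsTreeWalk σ e)
    (hP : ∀ i j, sameBlock P i j ↔ j = i ∨ j = σ i) (n : ℕ) :
    (consistentSet k n P).ncard = ((· ∘ e) ⁻¹' consistentSet k n P).ncard :=
  (Set.ncard_preimage_of_injective_subset_range he.surjective.injective_comp_right
    fun _ hp => he.exists_comp_eq_of_mem_consistentSet hP hp).symm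

lemma IsTreeWalk.preimage_consistentSet_subset (he : IsTreeWalk σ e)
    (hP : ∀ i j, sameBlock P i j ↔ j = i ∨ j = σ i) (n : ℕ) :
    (· ∘ e) ⁻¹' consistentSet k n P ⊆ Fintype.piFinset fun _ : Fin r => Icc 1 n :=
  fun _ hx => ((he.comp_mem_consistentSet_iff hP).mp hx).1

lemma ncard_piFinset_Icc (r n : ℕ) :
    (↑(Fintype.piFinset fun _ : Fin r => Icc 1 n) : Set (Fin r → ℕ)).ncard = n ^ r := by
  rw [Set.ncard_coe_finset]
  simp

lemma IsTreeWalk.ncard_consistentSet_le (he : IsTreeWalk σ e)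
    (hP : ∀ i j, sameBlock P i j ↔ j = i ∨ j = σ i) (n : ℕ) :
    (consistentSet k n P).ncard ≤ n ^ r := by
  rw [he.ncard_consistentSet_eq hP, ← ncard_piFinset_Icc]
  exact Set.ncard_le_ncard (he.preimage_consistentSet_subset hP n)

lemma IsTreeWalk.le_ncard_consistentSet (he : IsTreeWalk σ e)
    (hP : ∀ i j, sameBlock P i j ↔ j = i ∨ j = σ i) (n : ℕ) :
    n ^ r ≤ (consistentSet k n P).ncard + k * k * n ^ (r - 1) := by
  classical
  set box := Fintype.piFinset fun _ : Fin r => Icc 1 n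
  -- a labelling of the tree fails only through a coincidence of two different edge sums
  set bad := (univ.filter fun q : Fin k × Fin k => ¬ sameBlock P q.1 q.2).biUnion fun q =>
    box.filter fun x => x (e q.1) + x (e (q.1 + 1)) = x (e q.2) + x (e (q.2 + 1))
  have hbox : (box : Set (Fin r → ℕ)) ⊆ ((· ∘ e) ⁻¹' consistentSet k n P) ∪ bad := by
    intro x hx
    by_contra hxbad
    simp only [Set.mem_union, Set.mem_preimage, he.comp_mem_consistentSet_iff hP, mem_coe,
      not_or, not_and, not_forall, not_not] at hxbad
    obtain ⟨i, j, hij, hsum⟩ := hxbad.1 hx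
    exact hxbad.2 (mem_biUnion.mpr ⟨(i, j), by simpa using hij, mem_filter.mpr ⟨hx, hsum⟩⟩)
  have hbad : #bad ≤ k * k * n ^ (r - 1) := by
    refine card_biUnion_le.trans ((sum_le_card_nsmul _ _ (n ^ (r - 1)) fun q hq => ?_).trans ?_)
    · have hedge : s(e q.1, e (q.1 + 1)) ≠ s(e q.2, e (q.2 + 1)) := fun h =>
        (mem_filter.mp hq).2 ((hP _ _).mpr ((he.edge_eq_iff _ _).mp h))
      simpa using card_filter_add_eq_add_le hedge (Icc 1 n)
    · rw [smul_eq_mul]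
      gcongr
      exact (card_filter_le _ _).trans (by simp)
  have hfin : ((· ∘ e) ⁻¹' consistentSet k n P ∪ bad).Finite :=
    (box.finite_toSet.subset (he.preimage_consistentSet_subset hP n)).union bad.finite_toSet
  calc n ^ r = (box : Set (Fin r → ℕ)).ncard := (ncard_piFinset_Icc r n).symm
    _ ≤ ((· ∘ e) ⁻¹' consistentSet k n P).ncard + (bad : Set (Fin r → ℕ)).ncard :=
        (Set.ncard_le_ncard hbox hfin).trans (Set.ncard_union_le _ _)
    _ ≤ _ := by
        rw [← he.ncard_consistentSet_eq hP, Set.ncard_coe_finset]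
        gcongr

end Counting

theorem stmt8_general (m : ℕ) [NeZero (2 * m)]
    (P : Finpartition (Finset.univ : Finset (Fin (2 * m))))
    (hpair : isPairPartition P) (hnc : ¬ isCrossing P) :
    Tendsto (fun n : ℕ => ((consistentSet (2 * m) n P).ncard : ℝ) / (n : ℝ) ^ (m + 1))
      atTop (nhds 1) := by
  obtain ⟨σ, hσ, hfix, hP⟩ := exists_involution_of_isPairPartition hpair
  have hσnc : IsNoncrossing σ := fun a b c d hab hbc hcd hac hbd =>
    hnc ⟨a, b, c, d, hab, hbc, hcd, (hP a c).mpr (Or.inr hac.symm), (hP b d).mpr (Or.inr hbd.symm)⟩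
  obtain ⟨e, he⟩ := exists_isTreeWalk m σ hσ hfix hσnc
  exact tendsto_div_pow_of_le (he.ncard_consistentSet_le hP) (he.le_ncard_consistentSet hP)

/-- For a non-crossing pair partition `π` of `{1,…,k}`, `k = 2m > 0`,
`#S_n(π) / n^(k/2 + 1) → 1` as `n → ∞`. -/
theorem stmt8 (m : ℕ) (hm : 0 < m) [NeZero (2 * m)]
    (P : Finpartition (Finset.univ : Finset (Fin (2 * m))))
    (hpair : isPairPartition P) (hnc : ¬ isCrossing P) :
    Tendsto (fun n : ℕ => ((consistentSet (2 * m) n P).ncard : ℝ) / (n : ℝ) ^ (m + 1))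
      atTop (nhds 1) :=
  stmt8_general m P hpair hnc
end

section
/- Let k be even and π a pair partition of {1,…,k} with a block {i,j}, i < j, which is crossed by another block {i',j'} (i.e. i < i' < j and either j' < i or j < j'). Define S_n(π,i,j) := {(p_1,…,p_k) ∈ S_n(π) : (p_i,p_{i+1}) = (p_j,p_{j+1}) or (p_i,p_{i+1}) = (p_{j+1},p_j)}. Then #S_n(π,i,j) ≤ C·n^{k/2}, hence #S_n(π,i,j) = o(n^{k/2+1}) as n → ∞. -/
/-!
A point `p` of `S_n(π)` is determined by `p i` and its edge sums `p l + p (l + 1)`, which are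
constant on the blocks of `π`. On `S_n(π, i, j)` the value of the crossing block `{i', j'}` is
redundant: among the edges `i, …, j - 1` it occurs only at `i'`, so `p i` and the other block values
fix `p` on `i, …, i'` going forward and, as `p j` is fixed by `p i` and `p (i + 1)` in either
matching pattern, on `i' + 1, …, j` going backward, hence also the edge sum at `i'`. Counting the
two patterns, `n` values of `p i` and `2n` values for each remaining block gives
`2n (2n)^(k/2 - 1) = (2n)^(k/2)`.
-/

open Finset Filter

/-- `S_n(π, i, j)`: elements of `S_n(π)` with `P_i = P_j` or `P_i = P̄_j`, where
`P_l = (p l, p (l+1))`. -/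
def matchedSet (k n : ℕ) [NeZero k] (P : Finpartition (Finset.univ : Finset (Fin k)))
    (i j : Fin k) : Set (Fin k → ℕ) :=
  {p | p ∈ consistentSet k n P ∧
    ((p i = p j ∧ p (i + 1) = p (j + 1)) ∨ (p i = p (j + 1) ∧ p (i + 1) = p j))}

open Fin.NatCast

section ConsecutiveSums

variable {M : Type*} [Add M] {a b : ℕ → M}

theorem eq_of_add_succ_eq_of_le [IsLeftCancelAdd M] {s t : ℕ} (hst : s ≤ t) (hs : a s = b s)
    (h : ∀ r, s ≤ r → r < t → a r + a (r + 1) = b r + b (r + 1)) : a t = b t := by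
  induction t, hst using Nat.le_induction with
  | base => exact hs
  | succ t hst ih =>
    have ht : a t = b t := ih fun r hsr hrt => h r hsr (by omega)
    exact add_left_cancel (ht ▸ h t hst t.lt_succ_self)

theorem eq_of_add_succ_eq_of_ge [IsRightCancelAdd M] {s t : ℕ} (hst : s ≤ t) (ht : a t = b t)
    (h : ∀ r, s ≤ r → r < t → a r + a (r + 1) = b r + b (r + 1)) : a s = b s := by
  induction hst using Nat.decreasingInduction with
  | of_succ s hst ih =>
    have hs : a (s + 1) = b (s + 1) := ih fun r hsr hrt => h r (by omega) hrt
    exact add_right_cancel (hs ▸ h s le_rfl hst)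
  | self => exact ht

end ConsecutiveSums

def Fin.edgeSum {k : ℕ} [NeZero k] {M : Type*} [Add M] (p : Fin k → M) (l : Fin k) : M :=
  p l + p (l + 1)

namespace Fin

variable {k : ℕ} [NeZero k] {M : Type*} [Add M] {p q : Fin k → M}

theorem eq_of_edgeSum_eq [IsLeftCancelAdd M] (i : Fin k) (hi : p i = q i)
    (h : edgeSum p = edgeSum q) : p = q := by
  funext x
  have hx : ((x.val + k : ℕ) : Fin k) = x := by simp
  rw [← hx]
  refine eq_of_add_succ_eq_of_le (a := fun r : ℕ => p r) (b := fun r : ℕ => q r)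
    (by omega : i.val ≤ x.val + k) (by simpa using hi) fun r _ _ => ?_
  simpa [edgeSum, Nat.cast_succ] using congrFun h r

theorem edgeSum_eq_of_edgeSum_eq_off [IsCancelAdd M] {i i' j : Fin k} (hii' : i ≤ i')
    (hi'j : i' < j) (hi : p i = q i) (hj : p j = q j)
    (h : ∀ l, i ≤ l → l < j → l ≠ i' → edgeSum p l = edgeSum q l) :
    edgeSum p i' = edgeSum q i' := by
  set a : ℕ → M := fun r => p r
  set b : ℕ → M := fun r => q r
  have hedge : ∀ r, i.val ≤ r → r < j.val → r ≠ i'.val → a r + a (r + 1) = b r + b (r + 1) := by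
    intro r hir hrj hri'
    have hr : ((r : Fin k)).val = r := Fin.val_cast_of_lt (by omega)
    simpa [a, b, edgeSum, Nat.cast_succ] using
      h r (by rw [Fin.le_def, hr]; exact hir) (by rw [Fin.lt_def, hr]; exact hrj)
        (fun he => hri' (by rw [← he, hr]))
  have hi'p : a i'.val = b i'.val :=
    eq_of_add_succ_eq_of_le (Fin.le_def.mp hii') (by simpa [a, b] using hi)
      fun r hir hri' => hedge r hir (by omega) (by omega)
  have hi'q : a (i'.val + 1) = b (i'.val + 1) :=
    eq_of_add_succ_eq_of_ge (Fin.lt_def.mp hi'j) (by simpa [a, b] using hj)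
      fun r hir hrj => hedge r (by omega) hrj (by omega)
  simp only [a, b, Nat.cast_succ, Fin.cast_val_eq_self] at hi'p hi'q
  simp only [edgeSum, hi'p, hi'q]

end Fin

theorem Finpartition.card_parts_mul {α : Type*} [DecidableEq α] {s : Finset α} (P : Finpartition s)
    {c : ℕ} (h : ∀ b ∈ P.parts, b.card = c) : P.parts.card * c = s.card := by
  rw [← P.sum_card_parts, Finset.sum_congr rfl h, Finset.sum_const, smul_eq_mul]

theorem tendsto_div_pow_succ_of_le_mul_pow {f : ℕ → ℝ} {C : ℝ} {m : ℕ} (hf : ∀ n, 0 ≤ f n)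
    (h : ∀ n : ℕ, f n ≤ C * (n : ℝ) ^ m) :
    Tendsto (fun n : ℕ => f n / (n : ℝ) ^ (m + 1)) atTop (nhds 0) := by
  have hO : f =O[atTop] fun n : ℕ => (n : ℝ) ^ m :=
    Asymptotics.IsBigO.of_bound C (Eventually.of_forall fun n => by
      rw [Real.norm_of_nonneg (hf n), Real.norm_of_nonneg (by positivity)]
      exact h n)
  have ho : (fun n : ℕ => (n : ℝ) ^ m) =o[atTop] fun n : ℕ => (n : ℝ) ^ (m + 1) :=
    (Asymptotics.isLittleO_pow_pow_atTop_of_lt m.lt_succ_self).comp_tendsto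
      tendsto_natCast_atTop_atTop
  exact (hO.trans_isLittleO ho).tendsto_div_nhds_zero

section Crossing

variable {k n : ℕ} [NeZero k] {P : Finpartition (univ : Finset (Fin k))} {p q : Fin k → ℕ}

theorem edgeSum_eq_of_sameBlock (hp : p ∈ consistentSet k n P) {l l' : Fin k}
    (h : sameBlock P l l') : Fin.edgeSum p l = Fin.edgeSum p l' :=
  (hp.2 l l').2 h

theorem eq_of_edgeSum_eq_off_block (hp : p ∈ consistentSet k n P) (hq : q ∈ consistentSet k n P)
    {B : Finset (Fin k)} (hB : B ∈ P.parts) {i i' j : Fin k} (hi'B : i' ∈ B) (hii' : i ≤ i')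
    (hi'j : i' < j) (hBij : ∀ l ∈ B, i ≤ l → l < j → l = i') (hi : p i = q i) (hj : p j = q j)
    (hoff : ∀ l ∉ B, Fin.edgeSum p l = Fin.edgeSum q l) : p = q := by
  have hi' : Fin.edgeSum p i' = Fin.edgeSum q i' :=
    Fin.edgeSum_eq_of_edgeSum_eq_off hii' hi'j hi hj fun l hil hlj hne =>
      hoff l fun hl => hne (hBij l hl hil hlj)
  refine Fin.eq_of_edgeSum_eq i hi (funext fun l => ?_)
  by_cases hl : l ∈ B
  · have hs : sameBlock P l i' := ⟨B, hB, hl, hi'B⟩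
    rw [edgeSum_eq_of_sameBlock hp hs, edgeSum_eq_of_sameBlock hq hs, hi']
  · exact hoff l hl

theorem ncard_le_of_eq_of_edgeSum_eq_off {M : Set (Fin k → ℕ)} (hM : M ⊆ consistentSet k n P)
    {B : Finset (Fin k)} (hB : B ∈ P.parts) (i : Fin k)
    (hdet : ∀ p ∈ M, ∀ q ∈ M, p i = q i → (∀ l ∉ B, Fin.edgeSum p l = Fin.edgeSum q l) → p = q) :
    M.ncard ≤ n * (2 * n) ^ (P.parts.card - 1) := by
  let E := P.parts.erase B
  have hE : ∀ l ∉ B, P.part l ∈ E := fun l hl =>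
    mem_erase.2 ⟨fun h => hl (h ▸ P.mem_part (mem_univ l)), P.part_mem.2 (mem_univ l)⟩
  let φ : (Fin k → ℕ) → ℕ × (E → ℕ) := fun p =>
    (p i, fun b => Fin.edgeSum p (b.1.min' (P.nonempty_of_mem_parts (mem_of_mem_erase b.2))))
  let T := Icc 1 n ×ˢ Fintype.piFinset fun _ : E => Icc 1 (2 * n)
  have hmaps : ∀ p ∈ M, φ p ∈ (T : Set (ℕ × (E → ℕ))) := by
    intro p hp
    have hb := (hM hp).1
    have hsum (l : Fin k) : 1 ≤ Fin.edgeSum p l ∧ Fin.edgeSum p l ≤ 2 * n := by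
      simp only [Fin.edgeSum]
      constructor <;> linarith [hb l, hb (l + 1)]
    simp only [T, φ, coe_product, Set.mem_prod, mem_coe, mem_Icc, Fintype.mem_piFinset]
    exact ⟨hb i, fun b => hsum _⟩
  have hinj : Set.InjOn φ M := by
    intro p hp q hq hpq
    simp only [φ, Prod.mk.injEq, funext_iff] at hpq
    refine hdet p hp q hq hpq.1 fun l hl => ?_
    have hpart : P.part l ∈ P.parts := P.part_mem.2 (mem_univ l)
    have hs : sameBlock P l ((P.part l).min' (P.nonempty_of_mem_parts hpart)) :=
      ⟨P.part l, hpart, P.mem_part (mem_univ l), min'_mem _ _⟩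
    rw [edgeSum_eq_of_sameBlock (hM hp) hs, edgeSum_eq_of_sameBlock (hM hq) hs]
    exact hpq.2 ⟨P.part l, hE l hl⟩
  calc M.ncard ≤ (T : Set (ℕ × (E → ℕ))).ncard := Set.ncard_le_ncard_of_injOn φ hmaps hinj
    _ = n * (2 * n) ^ (P.parts.card - 1) := by
      rw [Set.ncard_coe_finset]
      simp [T, E, card_product, Fintype.card_piFinset, card_erase_of_mem hB]

theorem matchedSet_ncard_le {B : Finset (Fin k)} (hB : B ∈ P.parts) {i i' j : Fin k}
    (hi'B : i' ∈ B) (hii' : i < i') (hi'j : i' < j) (hBij : ∀ l ∈ B, i ≤ l → l < j → l = i') :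
    (matchedSet k n P i j).ncard ≤ (2 * n) ^ P.parts.card := by
  have hiB : i ∉ B := fun hi => hii'.ne (hBij i hi le_rfl (hii'.trans hi'j))
  let same : Set (Fin k → ℕ) := {p | p ∈ consistentSet k n P ∧ p i = p j ∧ p (i + 1) = p (j + 1)}
  let flipped : Set (Fin k → ℕ) :=
    {p | p ∈ consistentSet k n P ∧ p i = p (j + 1) ∧ p (i + 1) = p j}
  have hsplit : matchedSet k n P i j = same ∪ flipped := Set.ext fun _ => and_or_left
  have hsame : same.ncard ≤ n * (2 * n) ^ (P.parts.card - 1) :=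
    ncard_le_of_eq_of_edgeSum_eq_off (fun p hp => hp.1) hB i fun p hp q hq hi hoff =>
      eq_of_edgeSum_eq_off_block hp.1 hq.1 hB hi'B hii'.le hi'j hBij hi
        (by rw [← hp.2.1, ← hq.2.1, hi]) hoff
  -- `i ∉ B`, so `p i` and the edge sum at `i` determine `p (i + 1) = p j`
  have hflipped : flipped.ncard ≤ n * (2 * n) ^ (P.parts.card - 1) :=
    ncard_le_of_eq_of_edgeSum_eq_off (fun p hp => hp.1) hB i fun p hp q hq hi hoff =>
      eq_of_edgeSum_eq_off_block hp.1 hq.1 hB hi'B hii'.le hi'j hBij hi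
        (by
          have hedge := hoff i hiB
          rw [Fin.edgeSum, Fin.edgeSum, hi] at hedge
          rw [← hp.2.2, ← hq.2.2, add_left_cancel hedge])
        hoff
  have hc : P.parts.card ≠ 0 := (card_pos.2 ⟨B, hB⟩).ne'
  calc (matchedSet k n P i j).ncard ≤ _ + _ := hsplit ▸ Set.ncard_union_le _ _
    _ ≤ n * (2 * n) ^ (P.parts.card - 1) + n * (2 * n) ^ (P.parts.card - 1) :=
      add_le_add hsame hflipped
    _ = (2 * n) ^ P.parts.card := by rw [← pow_sub_one_mul hc]; ring

end Crossing

theorem stmt10_general (m : ℕ) [NeZero (2 * m)]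
    (P : Finpartition (Finset.univ : Finset (Fin (2 * m))))
    (hpair : ∀ b ∈ P.parts, b.card = 2)
    (i j i' j' : Fin (2 * m))
    (hb' : ({i', j'} : Finset (Fin (2 * m))) ∈ P.parts)
    (hcross : i < i' ∧ i' < j ∧ (j' < i ∨ j < j')) :
    (∃ C : ℝ, ∀ n : ℕ, ((matchedSet (2 * m) n P i j).ncard : ℝ) ≤ C * (n : ℝ) ^ m) ∧
      Tendsto (fun n : ℕ => ((matchedSet (2 * m) n P i j).ncard : ℝ) / (n : ℝ) ^ (m + 1))
        atTop (nhds 0) := by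
  obtain ⟨hii', hi'j, hj'⟩ := hcross
  have hparts : P.parts.card = m := by
    have := P.card_parts_mul hpair
    simp only [card_univ, Fintype.card_fin] at this
    omega
  have hmeet : ∀ l ∈ ({i', j'} : Finset (Fin (2 * m))), i ≤ l → l < j → l = i' := by
    simp only [mem_insert, mem_singleton]
    rintro l (rfl | rfl) hil hlj
    · rfl
    · rcases hj' with h | h <;> order
  have hbound (n : ℕ) : ((matchedSet (2 * m) n P i j).ncard : ℝ) ≤ 2 ^ m * (n : ℝ) ^ m := by
    have := matchedSet_ncard_le (n := n) hb' (mem_insert_self i' {j'}) hii' hi'j hmeet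
    rw [hparts, mul_pow] at this
    exact_mod_cast this
  exact ⟨⟨2 ^ m, hbound⟩, tendsto_div_pow_succ_of_le_mul_pow (fun _ => by positivity) hbound⟩

/-- Crossing property: if the block `{i,j}` of the pair partition `π` is crossed by a
block `{i',j'}` (i.e. `i < i' < j` and `j' < i` or `j < j'`), then
`#S_n(π,i,j) ≤ C n^(k/2)`, hence `#S_n(π,i,j) = o(n^(k/2+1))`. -/
theorem stmt10 (m : ℕ) [NeZero (2 * m)]
    (P : Finpartition (Finset.univ : Finset (Fin (2 * m))))
    (hpair : ∀ b ∈ P.parts, b.card = 2)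
    (i j i' j' : Fin (2 * m)) (hij : i < j)
    (hb : ({i, j} : Finset (Fin (2 * m))) ∈ P.parts)
    (hb' : ({i', j'} : Finset (Fin (2 * m))) ∈ P.parts)
    (hcross : i < i' ∧ i' < j ∧ (j' < i ∨ j < j')) :
    (∃ C : ℝ, ∀ n : ℕ, ((matchedSet (2 * m) n P i j).ncard : ℝ) ≤ C * (n : ℝ) ^ m) ∧
      Tendsto (fun n : ℕ => ((matchedSet (2 * m) n P i j).ncard : ℝ) / (n : ℝ) ^ (m + 1))
        atTop (nhds 0) :=
  stmt10_general m P hpair i j i' j' hb' hcross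
end

section
/- Let π be a pair partition of {1,…,k} (k even) and i < j with i ∼_π j, j > i+1, such that the restriction of π to {i+1,…,j−1} is a pair partition. Let (p_1,…,p_k) ∈ S_n(π) with p_{i+1} ≠ p_j. Then there exist α, β ∈ {1,…,j−i−1} with α ≠ β, i+α ∼_π i+β, and (−1)^α = (−1)^β. -/
open Finset

/-- The restriction of `π` to the open interval `{i+1, …, j-1}` is a pair partition:
every block meeting the interval is contained in it. -/
def interiorPaired {k : ℕ} (P : Finpartition (Finset.univ : Finset (Fin k)))
    (i j : Fin k) : Prop :=
  ∀ b ∈ P.parts, (∃ x ∈ b, (i : ℕ) < (x : ℕ) ∧ (x : ℕ) < (j : ℕ)) →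
    ∀ x ∈ b, (i : ℕ) < (x : ℕ) ∧ (x : ℕ) < (j : ℕ)

lemma telescope_aux (a : ℕ → ℤ) : ∀ d : ℕ,
    ∑ s ∈ Finset.Icc 1 d, (-1:ℤ)^(s+1) * (a s + a (s+1)) = a 1 + (-1:ℤ)^(d+1) * a (d+1)
  | 0 => by simp [pow_succ]
  | (d+1) => by
    rw [Finset.sum_Icc_succ_top (by omega : 1 ≤ d + 1), telescope_aux a d,
      pow_succ (-1:ℤ) (d+1)]
    ring

lemma two_mem_aux {α : Type*} [DecidableEq α] {b : Finset α} (h : b.card = 2) {x y z : α}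
    (hx : x ∈ b) (hy : y ∈ b) (hz : z ∈ b) (hyx : y ≠ x) (hzx : z ≠ x) : y = z := by
  obtain ⟨c, e, hce, rfl⟩ := Finset.card_eq_two.mp h
  simp only [Finset.mem_insert, Finset.mem_singleton] at hx hy hz
  rcases hx with rfl | rfl <;> rcases hy with rfl | rfl <;> rcases hz with rfl | rfl <;> tauto

lemma sign_opp_aux {s t : ℕ} (h : s % 2 ≠ t % 2) : (-1:ℤ)^(s+1) = -(-1:ℤ)^(t+1) := by
  rcases Nat.even_or_odd s with hs | hs
  · have ht : Odd t := Nat.odd_iff.mpr (by have h' := Nat.even_iff.mp hs; omega)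
    rw [(hs.add_one).neg_one_pow, (ht.add_one).neg_one_pow]; try ring
  · have ht : Even t := Nat.even_iff.mpr (by have h' := Nat.odd_iff.mp hs; omega)
    rw [(hs.add_one).neg_one_pow, (ht.add_one).neg_one_pow]; try ring

lemma fin_succ_aux {k : ℕ} [NeZero k] (t : ℕ) (h : t < k) (h2 : t + 1 < k) :
    (⟨t, h⟩ : Fin k) + 1 = ⟨t + 1, h2⟩ := by
  apply Fin.ext
  simp [Fin.add_def, Nat.mod_eq_of_lt h2, Nat.mod_eq_of_lt (by omega : 1 < k)]

/-- Parity lemma: if `{i,j} ∈ π` with `j > i+1`, `π` restricted to `{i+1,…,j-1}` is a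
pair partition, and `(p_1,…,p_k) ∈ S_n(π)` with `p (i+1) ≠ p j`, then there are
`α ≠ β` in `{1,…,j-i-1}` with `i+α ∼_π i+β` and `(-1)^α = (-1)^β`. -/
theorem stmt11 (m : ℕ) [NeZero (2 * m)]
    (P : Finpartition (Finset.univ : Finset (Fin (2 * m))))
    (hpair : ∀ b ∈ P.parts, b.card = 2)
    (i j : Fin (2 * m)) (hij : (i : ℕ) + 1 < (j : ℕ))
    (hb : ({i, j} : Finset (Fin (2 * m))) ∈ P.parts)
    (hint : interiorPaired P i j)
    (n : ℕ) (p : Fin (2 * m) → ℕ) (hp : p ∈ consistentSet (2 * m) n P)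
    (hne : p (i + 1) ≠ p j) :
    ∃ α β : ℕ, 1 ≤ α ∧ α ≤ (j : ℕ) - (i : ℕ) - 1 ∧ 1 ≤ β ∧ β ≤ (j : ℕ) - (i : ℕ) - 1 ∧
      α ≠ β ∧ α % 2 = β % 2 ∧
      ∃ (hα : (i : ℕ) + α < 2 * m) (hβ : (i : ℕ) + β < 2 * m),
        sameBlock P ⟨(i : ℕ) + α, hα⟩ ⟨(i : ℕ) + β, hβ⟩ := by
  by_contra hcon
  push_neg at hcon
  obtain ⟨hp1, hp2⟩ := hp
  have hj2m : (j : ℕ) < 2 * m := j.isLt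
  set d : ℕ := (j : ℕ) - (i : ℕ) - 1 with hd
  have hdj : (i : ℕ) + d + 1 = (j : ℕ) := by omega
  have hlt : ∀ s : ℕ, 1 ≤ s → s ≤ d → (i : ℕ) + s < 2 * m := by intro s h1 h2; omega
  have hlt' : ∀ s : ℕ, 1 ≤ s → s ≤ d → (i : ℕ) + s + 1 < 2 * m := by intro s h1 h2; omega
  -- the sequence
  set a : ℕ → ℤ := fun t => if h : (i : ℕ) + t < 2 * m then (p ⟨(i : ℕ) + t, h⟩ : ℤ) else 0
    with ha
  have a_eq : ∀ (t : ℕ) (h : (i : ℕ) + t < 2 * m), a t = (p ⟨(i : ℕ) + t, h⟩ : ℤ) := by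
    intro t h; simp only [ha]; rw [dif_pos h]
  -- the pairing spec
  set Spec : ℕ → ℕ → Prop := fun s t => 1 ≤ t ∧ t ≤ d ∧ t ≠ s ∧
      ∃ (h1 : (i : ℕ) + s < 2 * m) (h2 : (i : ℕ) + t < 2 * m),
        sameBlock P ⟨(i : ℕ) + s, h1⟩ ⟨(i : ℕ) + t, h2⟩ with hSpec
  have key : ∀ s ∈ Finset.Icc 1 d, ∃ t, Spec s t := by
    intro s hs
    rw [Finset.mem_Icc] at hs
    have h1 : (i : ℕ) + s < 2 * m := hlt s hs.1 hs.2
    set x : Fin (2 * m) := ⟨(i : ℕ) + s, h1⟩ with hx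
    obtain ⟨b, hbP, hxb⟩ := P.exists_mem (Finset.mem_univ x)
    obtain ⟨u, v, huv, rfl⟩ := Finset.card_eq_two.mp (hpair b hbP)
    have hyex : ∃ y, y ≠ x ∧ y ∈ ({u, v} : Finset (Fin (2 * m))) := by
      rcases Finset.mem_insert.mp hxb with rfl | h
      · exact ⟨v, fun h => huv h.symm, by simp⟩
      · rw [Finset.mem_singleton] at h
        subst h
        exact ⟨u, huv, by simp⟩
    obtain ⟨y, hyx, hyb⟩ := hyex
    have hxint : (i : ℕ) < (x : ℕ) ∧ (x : ℕ) < (j : ℕ) := by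
      constructor <;> simp only [hx] <;> omega
    have hyint := hint _ hbP ⟨x, hxb, hxint⟩ y hyb
    refine ⟨(y : ℕ) - (i : ℕ), by omega, by omega, ?_, h1, by omega, ?_⟩
    · intro h
      apply hyx
      apply Fin.ext
      simp only [hx]
      omega
    · refine ⟨{u, v}, hbP, hxb, ?_⟩
      have : (⟨(i : ℕ) + ((y : ℕ) - (i : ℕ)), by omega⟩ : Fin (2 * m)) = y := by
        apply Fin.ext; simp; omega
      rw [this]; exact hyb
  have uniq : ∀ s t u, Spec s t → Spec s u → t = u := by
    rintro s t u ⟨ht1, ht2, hts, h1, h2, b, hbP, hxb, hyb⟩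
      ⟨hu1, hu2, hus, h1', h2', b', hbP', hxb', hyb'⟩
    have hbb : b = b' := P.eq_of_mem_parts hbP hbP' hxb hxb'
    subst hbb
    have hne1 : (⟨(i : ℕ) + t, h2⟩ : Fin (2 * m)) ≠ ⟨(i : ℕ) + s, h1⟩ := by
      intro h; apply hts; have := Fin.mk.inj_iff.mp h; omega
    have hne2 : (⟨(i : ℕ) + u, h2'⟩ : Fin (2 * m)) ≠ ⟨(i : ℕ) + s, h1⟩ := by
      intro h; apply hus; have := Fin.mk.inj_iff.mp h; omega
    have := two_mem_aux (hpair b hbP) hxb hyb hyb' hne1 hne2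
    have := Fin.mk.inj_iff.mp this
    omega
  -- the involution
  set g : ∀ s ∈ Finset.Icc 1 d, ℕ := fun s hs => (key s hs).choose with hg
  have spec_g : ∀ s hs, Spec s (g s hs) := fun s hs => (key s hs).choose_spec
  have g_mem : ∀ s hs, g s hs ∈ Finset.Icc 1 d := by
    intro s hs
    obtain ⟨h1, h2, -⟩ := spec_g s hs
    exact Finset.mem_Icc.mpr ⟨h1, h2⟩
  have g_inv : ∀ s hs, g (g s hs) (g_mem s hs) = s := by
    intro s hs
    have hs' := Finset.mem_Icc.mp hs
    obtain ⟨h1, h2, hts, hx1, hx2, b, hbP, hxb, hyb⟩ := spec_g s hs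
    refine uniq (g s hs) _ s (spec_g _ (g_mem s hs)) ⟨hs'.1, hs'.2, fun h => hts h.symm, hx2, hx1,
      b, hbP, hyb, hxb⟩
  -- parity is opposite for each pair
  have par : ∀ s hs, s % 2 ≠ (g s hs) % 2 := by
    intro s hs heq
    have hs' := Finset.mem_Icc.mp hs
    obtain ⟨h1, h2, hts, hx1, hx2, hsb⟩ := spec_g s hs
    exact hcon s (g s hs) hs'.1 hs'.2 h1 h2 (fun h => hts h.symm)
      heq hx1 hx2 hsb
  -- value equality for each pair
  have val_eq : ∀ s hs, a s + a (s + 1) = a (g s hs) + a ((g s hs) + 1) := by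
    intro s hs
    have hs' := Finset.mem_Icc.mp hs
    obtain ⟨h1, h2, hts, hx1, hx2, hsb⟩ := spec_g s hs
    have hx1' : (i : ℕ) + s + 1 < 2 * m := hlt' s hs'.1 hs'.2
    have hx2' : (i : ℕ) + (g s hs) + 1 < 2 * m := hlt' _ h1 h2
    have hnat := (hp2 ⟨(i : ℕ) + s, hx1⟩ ⟨(i : ℕ) + (g s hs), hx2⟩).mpr hsb
    rw [fin_succ_aux _ hx1 hx1', fin_succ_aux _ hx2 hx2'] at hnat
    rw [a_eq s hx1, a_eq (g s hs) hx2, a_eq (s+1) (by omega), a_eq ((g s hs)+1) (by omega)]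
    have e1 : ((i : ℕ) + (s + 1)) = (i : ℕ) + s + 1 := by omega
    have e2 : ((i : ℕ) + ((g s hs) + 1)) = (i : ℕ) + (g s hs) + 1 := by omega
    simp only [e1, e2]
    exact_mod_cast hnat
  -- the sum vanishes
  have hsum0 : ∑ s ∈ Finset.Icc 1 d, (-1:ℤ)^(s+1) * (a s + a (s+1)) = 0 := by
    refine Finset.sum_involution g ?_ ?_ g_mem g_inv
    · intro s hs
      rw [← val_eq s hs, sign_opp_aux (par s hs)]
      ring
    · intro s hs _
      exact (spec_g s hs).2.2.1
  -- the telescoping value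
  have htel := telescope_aux a d
  rw [hsum0] at htel
  have hi1 : (i : ℕ) + 1 < 2 * m := by omega
  have ha1 : a 1 = (p (i + 1) : ℤ) := by
    rw [a_eq 1 hi1]
    have hfin := fin_succ_aux (k := 2 * m) (i : ℕ) i.isLt hi1
    exact congrArg (fun z => ((p z : ℕ) : ℤ)) hfin.symm
  have had : a (d + 1) = (p j : ℤ) := by
    rw [a_eq (d + 1) (by omega)]
    congr 2
    apply Fin.ext
    simp
    omega
  rw [ha1, had] at htel
  have hpi1 : 1 ≤ p (i + 1) := (hp1 (i + 1)).1
  rcases Nat.even_or_odd d with hev | hod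
  · rw [(hev.add_one).neg_one_pow] at htel
    apply hne
    have : (p (i + 1) : ℤ) = (p j : ℤ) := by linarith
    exact_mod_cast this
  · rw [(hod.add_one).neg_one_pow] at htel
    have : (0:ℤ) < (p (i + 1) : ℤ) + 1 * (p j : ℤ) := by
      have : (1:ℤ) ≤ (p (i+1) : ℤ) := by exact_mod_cast hpi1
      positivity
    omega
end

section
/- Let π be a pair partition of {1,…,k} (k even). If l > h(π), then B_n^{(l)}(π) = ∅, where h(π) := #{blocks {i,j}, i<j, of π such that j = i+1 or π restricted to {i+1,…,j−1} is a pair partition}. -/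
open Finset Filter

/-- `P_i = P_j` or `P_i = P̄_j`, where `P_l = (p l, p (l+1))`. -/
def matchedPair {k : ℕ} [NeZero k] (p : Fin k → ℕ) (i j : Fin k) : Prop :=
  (p i = p j ∧ p (i + 1) = p (j + 1)) ∨ (p i = p (j + 1) ∧ p (i + 1) = p j)

/-- `m(P_1,…,P_k)`: the number of matched index pairs `i < j`. -/
noncomputable def mcount {k : ℕ} [NeZero k] (p : Fin k → ℕ) : ℕ :=
  Set.ncard {ij : Fin k × Fin k | ij.1 < ij.2 ∧ matchedPair p ij.1 ij.2}

/-- All matched pairs are nested: `j = i+1` or `π|_{i+1,…,j-1}` is a pair partition. -/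
def nestedMatches {k : ℕ} [NeZero k] (P : Finpartition (Finset.univ : Finset (Fin k)))
    (p : Fin k → ℕ) : Prop :=
  ∀ i j : Fin k, i < j → matchedPair p i j →
    ((j : ℕ) = (i : ℕ) + 1 ∨ interiorPaired P i j)

/-- The height `h(π)`: the number of blocks `{i,j}`, `i < j`, with `j = i+1` or
`π|_{i+1,…,j-1}` a pair partition. -/
noncomputable def height {k : ℕ} (P : Finpartition (Finset.univ : Finset (Fin k))) : ℕ :=
  Set.ncard {b : Finset (Fin k) | b ∈ P.parts ∧ ∃ i j : Fin k, i < j ∧ b = {i, j} ∧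
    ((j : ℕ) = (i : ℕ) + 1 ∨ interiorPaired P i j)}

/-- `B_n^(l)(π)`: π-consistent tuples with exactly `l` matched pairs, all nested. -/
def Bset (k n l : ℕ) [NeZero k] (P : Finpartition (Finset.univ : Finset (Fin k))) :
    Set (Fin k → ℕ) :=
  {p | p ∈ consistentSet k n P ∧ mcount p = l ∧ nestedMatches P p}


/-- For a pair partition `π` of `{1,…,k}`, `k = 2m`, and `l > h(π)`, the set
`B_n^(l)(π)` is empty. -/
theorem stmt13 (m : ℕ) [NeZero (2 * m)]
    (P : Finpartition (Finset.univ : Finset (Fin (2 * m))))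
    (hpair : ∀ b ∈ P.parts, b.card = 2)
    (l : ℕ) (hl : height P < l) (n : ℕ) :
    Bset (2 * m) n l P = ∅ := by
  ext p
  simp only [Bset, Set.mem_setOf_eq, Set.mem_empty_iff_false, iff_false]
  rintro ⟨⟨hrange, hcons⟩, hm, hnest⟩
  have key : mcount p ≤ height P := by
    apply Set.ncard_le_ncard_of_injOn
      (fun ij : Fin (2*m) × Fin (2*m) => ({ij.1, ij.2} : Finset (Fin (2*m))))
    · rintro ⟨i, j⟩ ⟨hij, hmatch⟩
      have hsum : p i + p (i+1) = p j + p (j+1) := by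
        rcases hmatch with ⟨h1, h2⟩ | ⟨h1, h2⟩
        · rw [h1, h2]
        · rw [h1, h2]; ring
      obtain ⟨b, hb, hib, hjb⟩ := (hcons i j).mp hsum
      have hne : i ≠ j := ne_of_lt hij
      have hsub : ({i, j} : Finset _) ⊆ b := by
        intro x hx
        simp only [Finset.mem_insert, Finset.mem_singleton] at hx
        rcases hx with rfl | rfl <;> assumption
      have hbeq : ({i, j} : Finset _) = b := by
        apply Finset.eq_of_subset_of_card_le hsub
        rw [hpair b hb, Finset.card_insert_of_notMem (by simp [hne]),
          Finset.card_singleton]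
      show ({i, j} : Finset (Fin (2*m))) ∈ {b | b ∈ P.parts ∧ _}
      exact ⟨hbeq ▸ hb, i, j, hij, rfl, hnest i j hij hmatch⟩
    · rintro ⟨i, j⟩ ⟨hij, _⟩ ⟨i', j'⟩ ⟨hij', _⟩ heq
      simp only at heq
      have h1 : i ∈ ({i', j'} : Finset (Fin (2*m))) := by rw [← heq]; simp
      have h2 : j ∈ ({i', j'} : Finset (Fin (2*m))) := by rw [← heq]; simp
      have h3 : i' ∈ ({i, j} : Finset (Fin (2*m))) := by rw [heq]; simp
      simp only [Finset.mem_insert, Finset.mem_singleton] at h1 h2 h3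
      have : i = i' ∧ j = j' := by
        rcases h1 with rfl | rfl
        · rcases h2 with rfl | rfl
          · exact absurd hij (lt_irrefl _)
          · exact ⟨rfl, rfl⟩
        · rcases h3 with rfl | rfl
          · exact absurd hij' (lt_irrefl _)
          · exact absurd (hij.trans hij') (lt_irrefl _)
      exact Prod.ext this.1 this.2
  omega
end

section
/- A pair partition π of {1,…,k} (k even) satisfies h(π) = k/2 if and only if π is non-crossing, where h(π) := #{blocks {i,j}, i<j, of π with j = i+1 or π restricted to {i+1,…,j−1} a pair partition}. -/
open Finset

/-- In a pair partition, the block containing two distinct elements is exactly the pair. -/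
lemma pairBlock_eq {k : ℕ} {P : Finpartition (Finset.univ : Finset (Fin k))}
    (hpair : isPairPartition P) {b : Finset (Fin k)} (hb : b ∈ P.parts)
    {a c : Fin k} (ha : a ∈ b) (hc : c ∈ b) (hac : a ≠ c) : b = {a, c} := by
  have hsub : ({a, c} : Finset (Fin k)) ⊆ b := by
    intro x hx
    rcases Finset.mem_insert.mp hx with h | h
    · exact h ▸ ha
    · exact (Finset.mem_singleton.mp h) ▸ hc
  exact (Finset.eq_of_subset_of_card_le hsub
    (by rw [hpair b hb, Finset.card_pair hac])).symm

/-- A pair partition `π` of `{1,…,k}`, `k = 2m`, satisfies `h(π) = k/2` iff `π` is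
non-crossing. -/
theorem stmt17 (m : ℕ)
    (P : Finpartition (Finset.univ : Finset (Fin (2 * m))))
    (hpair : isPairPartition P) :
    height P = m ↔ ¬ isCrossing P := by
  classical
  have hcard : P.parts.card = m := by
    have hsum := P.sum_card_parts
    have h2 : ∑ b ∈ P.parts, b.card = 2 * P.parts.card := by
      rw [Finset.sum_congr rfl hpair, Finset.sum_const, smul_eq_mul, mul_comm]
    rw [h2, Finset.card_univ, Fintype.card_fin] at hsum
    omega
  set S : Set (Finset (Fin (2 * m))) :=
    {b : Finset (Fin (2 * m)) | b ∈ P.parts ∧ ∃ i j : Fin (2 * m), i < j ∧ b = {i, j} ∧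
      ((j : ℕ) = (i : ℕ) + 1 ∨ interiorPaired P i j)} with hSdef
  have hheight : height P = S.ncard := rfl
  have hSsub : S ⊆ ↑P.parts := fun b hb => hb.1
  constructor
  · -- height = m → no crossing
    intro hh hcross
    obtain ⟨i, j, l, mm, hij, hjl, hlm, ⟨b, hb, hib, hlb⟩, ⟨b', hb', hjb', hmb'⟩⟩ := hcross
    have hijn : (i : ℕ) < (j : ℕ) := hij
    have hjln : (j : ℕ) < (l : ℕ) := hjl
    have hlmn : (l : ℕ) < (mm : ℕ) := hlm
    have hil : i ≠ l := ne_of_lt (hij.trans hjl)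
    have hbeq : b = {i, l} := pairBlock_eq hpair hb hib hlb hil
    have hbad : b ∉ S := by
      rintro ⟨-, i', j', hij', hbeq', hcond⟩
      have hi' : i' ∈ ({i, l} : Finset (Fin (2 * m))) := by
        rw [← hbeq, hbeq']; simp
      have hj' : j' ∈ ({i, l} : Finset (Fin (2 * m))) := by
        rw [← hbeq, hbeq']; simp
      simp only [Finset.mem_insert, Finset.mem_singleton] at hi' hj'
      have hij'n : (i' : ℕ) < (j' : ℕ) := hij'
      have e1 : (i' : ℕ) = (i : ℕ) ∨ (i' : ℕ) = (l : ℕ) := by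
        rcases hi' with h | h <;> [left; right] <;> rw [h]
      have e2 : (j' : ℕ) = (i : ℕ) ∨ (j' : ℕ) = (l : ℕ) := by
        rcases hj' with h | h <;> [left; right] <;> rw [h]
      have hi'i : i' = i := Fin.ext (by omega)
      have hj'l : j' = l := Fin.ext (by omega)
      subst hi'i; subst hj'l
      rcases hcond with hadj | hint
      · omega
      · have := hint b' hb' ⟨j, hjb', hijn, hjln⟩ mm hmb'
        omega
    have hss : S ⊂ ↑P.parts :=
      ⟨hSsub, fun hcon => hbad (hcon (Finset.mem_coe.mpr hb))⟩
    have := Set.ncard_lt_ncard hss P.parts.finite_toSet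
    rw [Set.ncard_coe_finset, hcard, ← hheight, hh] at this
    omega
  · -- no crossing → height = m
    intro hnc
    have hall : ∀ b ∈ P.parts, b ∈ S := by
      intro b hb
      have key : ∀ x y : Fin (2 * m), x < y → b = {x, y} → b ∈ S := by
        intro x y hxy hbxy
        refine ⟨hb, x, y, hxy, hbxy, ?_⟩
        by_cases hadj : (y : ℕ) = (x : ℕ) + 1
        · exact Or.inl hadj
        · right
          rintro b' hb' ⟨z, hz, hxz, hzy⟩ w hw
          by_contra hcon
          push_neg at hcon
          have hxb : x ∈ b := by rw [hbxy]; simp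
          have hyb : y ∈ b := by rw [hbxy]; simp
          have hwx : (w : ℕ) ≠ (x : ℕ) := by
            intro h
            have hwxf : w = x := Fin.ext h
            have hbb : b' = b := P.eq_of_mem_parts hb' hb (hwxf ▸ hw) hxb
            have hzb : z ∈ b := hbb ▸ hz
            rw [hbxy] at hzb
            simp only [Finset.mem_insert, Finset.mem_singleton] at hzb
            rcases hzb with h' | h' <;> rw [h'] at hxz hzy <;> omega
          have hwy : (w : ℕ) ≠ (y : ℕ) := by
            intro h
            have hwyf : w = y := Fin.ext h
            have hbb : b' = b := P.eq_of_mem_parts hb' hb (hwyf ▸ hw) hyb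
            have hzb : z ∈ b := hbb ▸ hz
            rw [hbxy] at hzb
            simp only [Finset.mem_insert, Finset.mem_singleton] at hzb
            rcases hzb with h' | h' <;> rw [h'] at hxz hzy <;> omega
          have hcase : (w : ℕ) < (x : ℕ) ∨ (y : ℕ) < (w : ℕ) := by omega
          rcases hcase with hc | hc
          · exact hnc ⟨w, x, z, y, hc, hxz, hzy, ⟨b', hb', hw, hz⟩, ⟨b, hb, hxb, hyb⟩⟩
          · exact hnc ⟨x, z, y, w, hxz, hzy, hc, ⟨b, hb, hxb, hyb⟩, ⟨b', hb', hz, hw⟩⟩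
      obtain ⟨x, y, hxy, hbxy⟩ := Finset.card_eq_two.mp (hpair b hb)
      rcases hxy.lt_or_gt with h | h
      · exact key x y h hbxy
      · exact key y x h (by rw [hbxy, Finset.pair_comm])
    have hSeq : S = ↑P.parts :=
      Set.Subset.antisymm hSsub (fun b hb => hall b (Finset.mem_coe.mp hb))
    rw [hheight, hSeq, Set.ncard_coe_finset, hcard]
end
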